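/- A finite word w is rich if and only if for every nonempty suffix position, appending the next letter creates a new palindrome; equivalently, w is rich if and only if for every prefix p of w of positive length, the longest palindromic suffix of p is unioccurrent in p. -/

import Mathlib

/-!
Appending a letter `a` to a word `q` creates at most one new palindromic factor, namely the
longest palindromic suffix `lps (q ++ [a])`: every shorter palindromic suffix is also a proper
prefix of it, hence already occurs in `q`. So a word of length `n` has at most `n + 1`
palindromic factors, and it has exactly `n + 1` iff every nonempty prefix gains a new one, i.e.
iff the longest palindromic suffix of every nonempty prefix is unioccurrent in it.
-/

open List

variable {A : Type*}

/-- All factors (contiguous subwords) of a word, as a list. -/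
def Factors (w : List A) : List (List A) := w.tails.flatMap List.inits

/-- The set of distinct palindromic factors of `w` (including the empty word). -/
def palFactors [DecidableEq A] (w : List A) : Finset (List A) :=
  ((Factors w).filter (fun u => decide (u.reverse = u))).toFinset

/-- A word is rich if it has exactly `|w| + 1` distinct palindromic factors. -/
def IsRich [DecidableEq A] (w : List A) : Prop :=
  (palFactors w).card = w.length + 1

/-- The defect of a finite word. -/
def defect [DecidableEq A] (w : List A) : ℕ :=
  w.length + 1 - (palFactors w).card

/-- `u` is a (finite) factor of the infinite word `z`. -/
def FactorOfInf (u : List A) (z : ℕ → A) : Prop :=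
  ∃ i, u = (List.range u.length).map (fun k => z (i + k))

/-- An infinite word is rich if all of its finite factors are rich. -/
def InfRich [DecidableEq A] (z : ℕ → A) : Prop :=
  ∀ u : List A, FactorOfInf u z → IsRich u

/-- The longest palindromic suffix of `w`. -/
def lps [DecidableEq A] (w : List A) : List A :=
  (w.tails.find? (fun u => decide (u.reverse = u))).getD []

/-- The number of occurrences of `u` as a factor of `w` (counted by position). -/
def occCount [DecidableEq A] (u w : List A) : ℕ :=
  w.tails.countP (fun t => decide (u <+: t))

/-- The periodic infinite word `u^∞`. -/
def periodicWord (u : List A) (hu : u ≠ []) : ℕ → A :=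
  fun i => u.get ⟨i % u.length, Nat.mod_lt _ (List.length_pos_iff.mpr hu)⟩

theorem List.Nodup.countP_eq_one_iff {p : A → Bool} {l : List A} (hl : l.Nodup) {x : A}
    (hx : x ∈ l) (hpx : p x) : l.countP p = 1 ↔ ∀ y ∈ l, p y → y = x := by
  have hx' : x ∈ l.filter p := mem_filter.2 ⟨hx, hpx⟩
  rw [countP_eq_length_filter, length_eq_one_iff]
  constructor
  · rintro ⟨a, ha⟩ y hy hpy
    have hy' : y ∈ l.filter p := mem_filter.2 ⟨hy, hpy⟩
    rw [ha, mem_singleton] at hx' hy'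
    rw [hx', hy']
  · intro h
    have hrep : l.filter p = replicate (l.filter p).length x :=
      eq_replicate_iff.2 ⟨rfl, fun y hy => h y (mem_of_mem_filter hy) (mem_filter.1 hy).2⟩
    have hle := nodup_replicate.1 (hrep ▸ hl.filter p)
    have hpos := length_pos_of_mem hx'
    exact ⟨x, by rw [hrep, show (l.filter p).length = 1 by omega, replicate_one]⟩

theorem List.nodup_tails (w : List A) : w.tails.Nodup := by
  induction w with
  | nil => simp
  | cons a l ih =>
    refine tails_cons a l ▸ nodup_cons.2 ⟨fun h => ?_, ih⟩
    simpa using ((mem_tails _ _).1 h).length_le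

theorem infix_of_append_eq_concat {s u t q : List A} {a : A} (ht : t ≠ [])
    (h : s ++ u ++ t = q ++ [a]) : u <:+: q := by
  obtain ⟨t', b, rfl⟩ := (eq_nil_or_concat t).resolve_left ht
  have h' : (s ++ u ++ t') ++ [b] = q ++ [a] := by
    simpa only [append_assoc, concat_eq_append] using h
  exact ⟨s, t', (append_inj' h' rfl).1⟩

theorem occCount_eq_one_iff [DecidableEq A] {u w : List A} (hu : u <:+ w) :
    occCount u w = 1 ↔ ∀ t, t <:+ w → u <+: t → t = u := by
  rw [occCount, (nodup_tails w).countP_eq_one_iff (p := fun t => decide (u <+: t))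
    ((mem_tails _ _).2 hu) (decide_eq_true prefix_rfl)]
  simp only [mem_tails, decide_eq_true_eq]

/-- The only occurrence of a suffix `u` of `q ++ [a]` that is not inside `q` is `u` itself. -/
theorem occCount_concat_eq_one_iff [DecidableEq A] {u q : List A} {a : A}
    (hu : u <:+ q ++ [a]) :
    occCount u (q ++ [a]) = 1 ↔ ¬ u <:+: q := by
  rw [occCount_eq_one_iff hu]
  constructor
  · rintro h ⟨s, r, rfl⟩
    have := h (u ++ r ++ [a]) ⟨s, by simp⟩ ⟨r ++ [a], by simp⟩
    simpa using congrArg length this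
  · rintro h t ⟨s, hs⟩ ⟨r, rfl⟩
    by_contra hne
    exact h (infix_of_append_eq_concat (t := r) (fun hr => hne (by simp [hr])) (by simpa using hs))

theorem lps_cons [DecidableEq A] (a : A) (l : List A) :
    lps (a :: l) = if (a :: l).reverse = a :: l then a :: l else lps l := by
  by_cases h : (a :: l).reverse = a :: l
  · rw [lps, tails_cons, find?_cons, decide_eq_true h, if_pos h]
    rfl
  · rw [lps, tails_cons, find?_cons, decide_eq_false h, if_neg h]
    rfl

theorem lps_suffix [DecidableEq A] (w : List A) : lps w <:+ w := by
  induction w with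
  | nil => simp [lps]
  | cons a l ih =>
    rw [lps_cons]
    split_ifs
    exacts [suffix_rfl, ih.trans (suffix_cons a l)]

theorem reverse_lps [DecidableEq A] (w : List A) : (lps w).reverse = lps w := by
  induction w with
  | nil => simp [lps]
  | cons a l ih =>
    rw [lps_cons]
    split_ifs with h
    exacts [h, ih]

theorem suffix_lps_of_reverse_eq [DecidableEq A] {u w : List A} (hs : u <:+ w)
    (hp : u.reverse = u) : u <:+ lps w := by
  induction w with
  | nil => simpa [lps] using hs
  | cons a l ih =>
    rw [lps_cons]
    split_ifs with h
    · exact hs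
    · exact ih ((suffix_cons_iff.1 hs).resolve_left (by rintro rfl; exact h hp))

theorem mem_palFactors [DecidableEq A] {u w : List A} :
    u ∈ palFactors w ↔ u <:+: w ∧ u.reverse = u := by
  simp only [palFactors, Factors, mem_toFinset, mem_filter, mem_flatMap, mem_tails, mem_inits,
    decide_eq_true_eq, infix_iff_prefix_suffix]
  tauto

theorem palFactors_nil [DecidableEq A] : palFactors ([] : List A) = {[]} := by
  ext u
  simp only [mem_palFactors, infix_nil, Finset.mem_singleton, and_iff_left_iff_imp]
  rintro rfl
  rfl

theorem infix_of_reverse_eq_of_ne_lps [DecidableEq A] {u q : List A} {a : A}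
    (hs : u <:+ q ++ [a]) (hp : u.reverse = u) (hne : u ≠ lps (q ++ [a])) : u <:+: q := by
  have hpre : u <+: lps (q ++ [a]) := by
    rw [← hp, ← reverse_lps, reverse_prefix]
    exact suffix_lps_of_reverse_eq hs hp
  obtain ⟨t, ht⟩ := hpre
  obtain ⟨s, hsl⟩ := lps_suffix (q ++ [a])
  exact infix_of_append_eq_concat (s := s) (t := t) (by rintro rfl; simp [← ht] at hne)
    (by rw [append_assoc, ht, hsl])

theorem palFactors_concat [DecidableEq A] (q : List A) (a : A) :
    palFactors (q ++ [a]) = insert (lps (q ++ [a])) (palFactors q) := by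
  ext u
  simp only [Finset.mem_insert, mem_palFactors, infix_concat_iff]
  constructor
  · rintro ⟨hs | hi, hp⟩
    · by_cases hl : u = lps (q ++ [a])
      · exact .inl hl
      · exact .inr ⟨infix_of_reverse_eq_of_ne_lps hs hp hl, hp⟩
    · exact .inr ⟨hi, hp⟩
  · rintro (rfl | ⟨hi, hp⟩)
    · exact ⟨.inl (lps_suffix _), reverse_lps _⟩
    · exact ⟨.inr hi, hp⟩

theorem card_palFactors_concat [DecidableEq A] (q : List A) (a : A) :
    (palFactors (q ++ [a])).card = (palFactors q).card +
      if occCount (lps (q ++ [a])) (q ++ [a]) = 1 then 1 else 0 := by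
  rw [palFactors_concat]
  split_ifs with h <;> rw [occCount_concat_eq_one_iff (lps_suffix _)] at h
  · exact Finset.card_insert_of_notMem fun hm => h (mem_palFactors.1 hm).1
  · rw [Finset.insert_eq_of_mem (mem_palFactors.2 ⟨not_not.1 h, reverse_lps _⟩), add_zero]

theorem card_palFactors_le [DecidableEq A] (w : List A) :
    (palFactors w).card ≤ w.length + 1 := by
  induction w using reverseRecOn with
  | nil => simp [palFactors_nil]
  | append_singleton q a ih =>
    rw [card_palFactors_concat, length_append, length_singleton]
    split_ifs <;> omega

theorem isRich_nil [DecidableEq A] : IsRich ([] : List A) := by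
  simp [IsRich, palFactors_nil]

theorem isRich_concat_iff [DecidableEq A] (q : List A) (a : A) :
    IsRich (q ++ [a]) ↔ IsRich q ∧ occCount (lps (q ++ [a])) (q ++ [a]) = 1 := by
  have := card_palFactors_le q
  rw [IsRich, IsRich, card_palFactors_concat, length_append, length_singleton]
  split_ifs <;> omega

theorem rich_iff_lps_unioccurrent_prefixes [DecidableEq A] (w : List A) :
    IsRich w ↔ ∀ p : List A, p <+: w → p ≠ [] → occCount (lps p) p = 1 := by
  induction w using reverseRecOn with
  | nil => simp [isRich_nil]
  | append_singleton q a ih =>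
    simp only [isRich_concat_iff, ih, prefix_concat_iff]
    constructor
    · rintro ⟨hq, hlast⟩ p (rfl | hp) hne
      exacts [hlast, hq p hp hne]
    · intro h
      exact ⟨fun p hp => h p (.inr hp), h _ (.inl rfl) (by simp)⟩
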